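/- arXiv:1611.05269 — 2 statements merged into one kernel-verified Lean document; each statement's English description precedes it below -/
import Mathlib

section
/- Let J_h be a diagonal N×N matrix with diagonal entries J_h(i) ∈ {-j, 0, +j}, where J_h(i) = -j for i in Γ₂, 0 for i in Γ₁∪Γ₃, and +j for i in Γ₄. If x ∈ ℝ^N has GFT x̂ = V^{-1}x satisfying the conjugate-symmetry x̂(i') = x̂(i)* and v_{i'} = v_i* for paired indices i ∈ Γ₂, i' ∈ Γ₄, then the graph Hilbert transform x_h = V J_h V^{-1} x is real-valued. -/
/-!
Expanding in the eigenbasis, `x_h k = ∑ i, V k i * d i * x̂ i`. The involution `σ` pairs the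
term of `i ∈ Γ₂` with its complex conjugate at `σ i ∈ Γ₄` (all three factors conjugate, and
`d` takes the values `∓ j`), while the terms in `Γ₁ ∪ Γ₃` vanish. Reindexing the sum by `σ`
therefore shows that it equals its own conjugate.
-/

open Matrix Complex Function ComplexConjugate

theorem Complex.im_sum_eq_zero_of_involutive {ι : Type*} [Fintype ι] {σ : ι → ι}
    (hσ : Involutive σ) {f : ι → ℂ} (hf : ∀ i, f (σ i) = conj (f i)) :
    (∑ i, f i).im = 0 := by
  rw [← conj_eq_iff_im, map_sum]
  simp_rw [← hf]
  exact Equiv.sum_comp (hσ.toPerm σ) f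

theorem Matrix.mul_diagonal_mul_mulVec_apply {m n o α : Type*} [CommSemiring α]
    [Fintype n] [DecidableEq n] [Fintype o] (A : Matrix m n α) (d : n → α)
    (B : Matrix n o α) (v : o → α) (k : m) : ((A * diagonal d * B) *ᵥ v) k = ∑ i, A k i * d i * (B *ᵥ v) i := by
  rw [← mulVec_mulVec]
  simp only [mulVec, dotProduct, mul_diagonal]

theorem Function.Involutive.apply_eq_conj_of_mem_union {ι : Type*} {σ : ι → ι}
    (hσ : Involutive σ) {s t : Set ι} (hts : ∀ i ∈ t, σ i ∈ s) {g : ι → ℂ}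
    (hg : ∀ i ∈ s, g (σ i) = conj (g i)) : ∀ i ∈ s ∪ t, g (σ i) = conj (g i) := by
  rintro i (hi | hi)
  · exact hg i hi
  · have h := hg (σ i) (hts i hi)
    rw [hσ i] at h
    rw [h, conj_conj]

section Partition

variable {ι : Type*} [DecidableEq ι] {G1 G2 G3 G4 : Finset ι}
  (hpartition : ∀ i, (i ∈ G1 ∧ i ∉ G2 ∧ i ∉ G3 ∧ i ∉ G4) ∨
      (i ∉ G1 ∧ i ∈ G2 ∧ i ∉ G3 ∧ i ∉ G4) ∨
      (i ∉ G1 ∧ i ∉ G2 ∧ i ∈ G3 ∧ i ∉ G4) ∨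
      (i ∉ G1 ∧ i ∉ G2 ∧ i ∉ G3 ∧ i ∈ G4))
  {σ : ι → ι} (hσ : Involutive σ)
  (hσ24 : ∀ i ∈ G2, σ i ∈ G4) (hσ42 : ∀ i ∈ G4, σ i ∈ G2)
include hpartition hσ hσ24 hσ42

theorem apply_mem_union_of_mem_union {i : ι} (hi : i ∈ G1 ∪ G3) : σ i ∈ G1 ∪ G3 := by
  have hi24 : i ∉ G2 ∧ i ∉ G4 := by
    rcases Finset.mem_union.1 hi with h | h <;> rcases hpartition i with h' | h' | h' | h' <;>
      tauto
  have h2 : σ i ∉ G2 := fun h => hi24.2 (hσ i ▸ hσ24 _ h)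
  have h4 : σ i ∉ G4 := fun h => hi24.1 (hσ i ▸ hσ42 _ h)
  rcases hpartition (σ i) with h | h | h | h <;> simp_all

theorem apply_eq_conj_of_partition {d : ι → ℂ} (hd2 : ∀ i ∈ G2, d i = -I)
    (hd13 : ∀ i ∈ G1 ∪ G3, d i = 0) (hd4 : ∀ i ∈ G4, d i = I) (i : ι) :
    d (σ i) = conj (d i) := by
  have h13 (hi : i ∈ G1 ∪ G3) : d (σ i) = conj (d i) := by
    rw [hd13 i hi, hd13 _ (apply_mem_union_of_mem_union hpartition hσ hσ24 hσ42 hi), map_zero]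
  rcases hpartition i with ⟨h, -⟩ | ⟨-, h, -⟩ | ⟨-, -, h, -⟩ | ⟨-, -, -, h⟩
  · exact h13 (Finset.mem_union_left _ h)
  · rw [hd2 i h, hd4 _ (hσ24 i h), map_neg, conj_I, neg_neg]
  · exact h13 (Finset.mem_union_right _ h)
  · rw [hd4 i h, hd2 _ (hσ42 i h), conj_I]

end Partition

theorem graph_hilbert_transform_real_general
    (N : ℕ) (V W : Matrix (Fin N) (Fin N) ℂ)
    (G1 G2 G3 G4 : Finset (Fin N))
    (hpartition : ∀ i, (i ∈ G1 ∧ i ∉ G2 ∧ i ∉ G3 ∧ i ∉ G4) ∨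
      (i ∉ G1 ∧ i ∈ G2 ∧ i ∉ G3 ∧ i ∉ G4) ∨
      (i ∉ G1 ∧ i ∉ G2 ∧ i ∈ G3 ∧ i ∉ G4) ∨
      (i ∉ G1 ∧ i ∉ G2 ∧ i ∉ G3 ∧ i ∈ G4))
    (d : Fin N → ℂ)
    (hd2 : ∀ i ∈ G2, d i = -Complex.I)
    (hd13 : ∀ i ∈ G1 ∪ G3, d i = 0)
    (hd4 : ∀ i ∈ G4, d i = Complex.I)
    (σ : Fin N → Fin N) (hσ : Function.Involutive σ)
    (hσ24 : ∀ i ∈ G2, σ i ∈ G4) (hσ42 : ∀ i ∈ G4, σ i ∈ G2)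
    (hpair : ∀ i ∈ G2, (fun k => V k (σ i)) = (fun k => (starRingEnd ℂ) (V k i)))
    (x : Fin N → ℝ)
    (xhat : Fin N → ℂ) (hxhat : xhat = W.mulVec (fun i => (x i : ℂ)))
    (hconj : ∀ i ∈ G2, xhat (σ i) = (starRingEnd ℂ) (xhat i))
    (xh : Fin N → ℂ)
    (hxh : xh = (V * Matrix.diagonal d * W).mulVec (fun i => (x i : ℂ))) :
    ∀ k, (xh k).im = 0 := by
  intro k
  have hd := apply_eq_conj_of_partition hpartition hσ hσ24 hσ42 hd2 hd13 hd4
  have hV := hσ.apply_eq_conj_of_mem_union hσ42 (g := (V k ·)) fun i hi => congrFun (hpair i hi) k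
  have hx := hσ.apply_eq_conj_of_mem_union hσ42 hconj
  have hterm : ∀ i, V k (σ i) * d (σ i) * xhat (σ i) = conj (V k i * d i * xhat i) := by
    intro i
    by_cases hi : i ∈ (G2 : Set (Fin N)) ∪ G4
    · rw [hV i hi, hd i, hx i hi, map_mul, map_mul]
    · have hi13 : i ∈ G1 ∪ G3 := by
        rcases hpartition i with h | h | h | h <;> simp_all
      rw [hd i, hd13 i hi13]
      simp
  rw [hxh, mul_diagonal_mul_mulVec_apply, ← hxhat]
  exact im_sum_eq_zero_of_involutive hσ hterm

/-- The graph Hilbert transform x_h = V J_h V⁻¹ x of a real signal with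
conjugate-symmetric GFT is real-valued. -/
theorem graph_hilbert_transform_real
    (N : ℕ) (V W : Matrix (Fin N) (Fin N) ℂ)
    (hVW : V * W = 1) (hWV : W * V = 1)
    (G1 G2 G3 G4 : Finset (Fin N))
    (hpartition : ∀ i, (i ∈ G1 ∧ i ∉ G2 ∧ i ∉ G3 ∧ i ∉ G4) ∨
      (i ∉ G1 ∧ i ∈ G2 ∧ i ∉ G3 ∧ i ∉ G4) ∨
      (i ∉ G1 ∧ i ∉ G2 ∧ i ∈ G3 ∧ i ∉ G4) ∨
      (i ∉ G1 ∧ i ∉ G2 ∧ i ∉ G3 ∧ i ∈ G4))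
    (d : Fin N → ℂ)
    (hd2 : ∀ i ∈ G2, d i = -Complex.I)
    (hd13 : ∀ i ∈ G1 ∪ G3, d i = 0)
    (hd4 : ∀ i ∈ G4, d i = Complex.I)
    (σ : Fin N → Fin N) (hσ : Function.Involutive σ)
    (hσ24 : ∀ i ∈ G2, σ i ∈ G4) (hσ42 : ∀ i ∈ G4, σ i ∈ G2)
    (hpair : ∀ i ∈ G2, (fun k => V k (σ i)) = (fun k => (starRingEnd ℂ) (V k i)))
    (x : Fin N → ℝ)
    (xhat : Fin N → ℂ) (hxhat : xhat = W.mulVec (fun i => (x i : ℂ)))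
    (hconj : ∀ i ∈ G2, xhat (σ i) = (starRingEnd ℂ) (xhat i))
    (xh : Fin N → ℂ)
    (hxh : xh = (V * Matrix.diagonal d * W).mulVec (fun i => (x i : ℂ))) :
    ∀ k, (xh k).im = 0 :=
  graph_hilbert_transform_real_general N V W G1 G2 G3 G4 hpartition d hd2 hd13 hd4 σ hσ hσ24 hσ42
    hpair x xhat hxhat hconj xh hxh
end

section
/- Generalized quadrature phase-shifting: for i ∈ Γ₂ with v_{i'} = v_i* for the paired i' ∈ Γ₄, the graph Hilbert transform satisfies H(Re(v_i)) = Im(v_i) and H(Im(v_i)) = -Re(v_i). -/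
/-!
Writing `Re v = (v + v̄) / 2` and `Im v = -(i / 2) (v - v̄)`, both are combinations of the eigenvectors
`v` and `v̄ = v_{i'}` of `H`, with eigenvalues `-i` and `i`, so `H` acts on them by `±i` termwise.
-/

open Matrix Complex

theorem Complex.ofReal_re_comp_eq {n : Type*} (v : n → ℂ) :
    (fun k => ((v k).re : ℂ)) = (2 : ℂ)⁻¹ • (v + star v) := by
  funext k
  simp only [Pi.smul_apply, Pi.add_apply, Pi.star_apply, smul_eq_mul, star_def, add_conj]
  push_cast; ring

theorem Complex.ofReal_im_comp_eq {n : Type*} (v : n → ℂ) :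
    (fun k => ((v k).im : ℂ)) = (-I / 2) • (v - star v) := by
  funext k
  simp only [Pi.smul_apply, Pi.sub_apply, Pi.star_apply, smul_eq_mul, star_def, sub_conj]
  push_cast
  linear_combination ((v k).im : ℂ) * I_sq

variable {n : Type*} [Fintype n]

theorem Matrix.mul_diagonal_mul_mulVec_col {R : Type*} [CommSemiring R] [DecidableEq n]
    (V W : Matrix n n R) (hWV : W * V = 1) (d : n → R) (j : n) :
    (V * diagonal d * W) *ᵥ V.col j = d j • V.col j := by
  conv_lhs => rw [← mulVec_single_one]
  rw [mulVec_mulVec, Matrix.mul_assoc, Matrix.mul_assoc, hWV, Matrix.mul_one, ← mulVec_mulVec,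
    diagonal_mulVec_single, mul_one, mulVec_single, op_smul_eq_smul]

theorem Matrix.mulVec_re_im_of_conj_eigenvectors (H : Matrix n n ℂ) (v : n → ℂ)
    (hv : H *ᵥ v = -I • v) (hv' : H *ᵥ star v = I • star v) :
    H *ᵥ (fun k => ((v k).re : ℂ)) = (fun k => ((v k).im : ℂ)) ∧
    H *ᵥ (fun k => ((v k).im : ℂ)) = -fun k => ((v k).re : ℂ) := by
  simp only [ofReal_re_comp_eq, ofReal_im_comp_eq, mulVec_smul, mulVec_add, mulVec_sub, hv, hv']
  constructor
  · module
  · match_scalars <;> linear_combination (1 / 2 : ℂ) * I_sq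

theorem graph_hilbert_phase_shift_general
    (N : ℕ) (V W : Matrix (Fin N) (Fin N) ℂ)
    (hWV : W * V = 1)
    (G2 G4 : Finset (Fin N))
    (d : Fin N → ℂ)
    (hd2 : ∀ i ∈ G2, d i = -Complex.I)
    (hd4 : ∀ i ∈ G4, d i = Complex.I)
    (H : Matrix (Fin N) (Fin N) ℂ) (hH : H = V * Matrix.diagonal d * W)
    (i i' : Fin N) (hi : i ∈ G2) (hi' : i' ∈ G4)
    (hpair : (fun k => V k i') = (fun k => (starRingEnd ℂ) (V k i))) :
    H.mulVec (fun k => ((V k i).re : ℂ)) = (fun k => ((V k i).im : ℂ)) ∧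
    H.mulVec (fun k => ((V k i).im : ℂ)) = (fun k => -((V k i).re : ℂ)) := by
  have hconj : star (V.col i) = V.col i' := hpair.symm
  subst hH
  refine mulVec_re_im_of_conj_eigenvectors _ (V.col i) ?_ ?_
  · rw [mul_diagonal_mul_mulVec_col V W hWV, hd2 i hi]
  · rw [hconj, mul_diagonal_mul_mulVec_col V W hWV, hd4 i' hi']

/-- Generalized quadrature phase-shifting: H(Re v_i) = Im v_i and
H(Im v_i) = -Re v_i for conjugate-paired eigenvectors. -/
theorem graph_hilbert_phase_shift
    (N : ℕ) (V W : Matrix (Fin N) (Fin N) ℂ)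
    (hVW : V * W = 1) (hWV : W * V = 1)
    (G1 G2 G3 G4 : Finset (Fin N))
    (d : Fin N → ℂ)
    (hd2 : ∀ i ∈ G2, d i = -Complex.I)
    (hd13 : ∀ i ∈ G1 ∪ G3, d i = 0)
    (hd4 : ∀ i ∈ G4, d i = Complex.I)
    (H : Matrix (Fin N) (Fin N) ℂ) (hH : H = V * Matrix.diagonal d * W)
    (i i' : Fin N) (hi : i ∈ G2) (hi' : i' ∈ G4)
    (hpair : (fun k => V k i') = (fun k => (starRingEnd ℂ) (V k i))) :
    H.mulVec (fun k => ((V k i).re : ℂ)) = (fun k => ((V k i).im : ℂ)) ∧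
    H.mulVec (fun k => ((V k i).im : ℂ)) = (fun k => -((V k i).re : ℂ)) :=
  graph_hilbert_phase_shift_general N V W hWV G2 G4 d hd2 hd4 H hH i i' hi hi' hpair
end
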